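/- arXiv:2210.16894 — 4 statements merged into one kernel-verified Lean document; each statement's English description precedes it below -/
import Mathlib

section
/- (Lemma 1.) Let P_s be a probability measure on X and ŵ : X → ℝ a measurable function with 0 ≤ ŵ(x) ≤ B for all x, such that x ↦ ŵ(x) φ(x) is Bochner integrable with respect to P_s, and set μ_{t'} = ∫ ŵ(x) φ(x) dP_s(x). Then for every δ ∈ (0,1), with probability at least 1 − δ over an i.i.d. sample x_1,…,x_{n_s} from P_s, the weighted empirical embedding mean satisfies ‖ (1/n_s) Σ_{i=1}^{n_s} ŵ(x_i) φ(x_i) − μ_{t'} ‖ ≤ B √(M/n_s) · (1 + √(2 log(1/δ))). -/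
/-!
Let `Z = ŵ • φ`, so `‖Z‖ ≤ R := B √M`, and let `f(x₁, …, xₙ) = ‖(1/n) ∑ Z(xᵢ) - μ_{t'}‖`.

*Mean.* The centred summands `Z(xᵢ) - μ_{t'}` are independent with mean zero, so the cross terms
of `‖∑ (Z(xᵢ) - μ_{t'})‖²` integrate to zero and `E f² = E‖Z - μ_{t'}‖² / n ≤ R² / n`; by Jensen,
`E f ≤ R / √n = B √(M/n)`.

*Deviation.* Moving one sample point moves `f` by at most `2R/n`. McDiarmid's inequality, proved by
integrating out one coordinate at a time and applying Hoeffding's lemma to each section, makes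
`f - E f` sub-Gaussian with variance proxy `n (R/n)² = R²/n`, and the Chernoff bound gives
`f - E f ≤ B √(M/n) √(2 log (1/δ))` outside an event of probability at most `δ`.
-/

open MeasureTheory ProbabilityTheory Real
open scoped RealInnerProductSpace NNReal ENNReal

section FinCons

variable {X : Type*} [MeasurableSpace X] {n : ℕ}

lemma measurableEmbedding_finCons :
    MeasurableEmbedding (fun q : X × (Fin n → X) ↦ (Fin.cons q.1 q.2 : Fin (n + 1) → X)) := by
  convert (MeasurableEquiv.piFinSuccAbove (fun _ : Fin (n + 1) ↦ X) 0).symm.measurableEmbedding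
    with q
  simp [MeasurableEquiv.piFinSuccAbove_symm_apply, Fin.insertNthEquiv, Fin.insertNth_zero']

lemma measurable_finCons_left (xs : Fin n → X) :
    Measurable fun y : X ↦ (Fin.cons y xs : Fin (n + 1) → X) :=
  measurableEmbedding_finCons.measurable.comp measurable_prodMk_right

lemma measurePreserving_finCons (μ : Measure X) [SigmaFinite μ] :
    MeasurePreserving (fun q : X × (Fin n → X) ↦ (Fin.cons q.1 q.2 : Fin (n + 1) → X))
      (μ.prod (Measure.pi fun _ ↦ μ)) (Measure.pi fun _ ↦ μ) := by
  convert (measurePreserving_piFinSuccAbove (fun _ : Fin (n + 1) ↦ μ) 0).symm with q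
  simp [MeasurableEquiv.piFinSuccAbove_symm_apply, Fin.insertNthEquiv, Fin.insertNth_zero']

lemma integral_pi_fin_succ {E : Type*} [NormedAddCommGroup E] [NormedSpace ℝ E]
    {μ : Measure X} [SigmaFinite μ] {G : (Fin (n + 1) → X) → E}
    (hG : Integrable G (Measure.pi fun _ ↦ μ)) :
    ∫ x, G x ∂(Measure.pi fun _ ↦ μ) =
      ∫ xs, ∫ y, G (Fin.cons y xs) ∂μ ∂(Measure.pi fun _ ↦ μ) := by
  rw [← (measurePreserving_finCons μ).integral_comp measurableEmbedding_finCons G]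
  exact integral_prod_symm _
    (((measurePreserving_finCons μ).integrable_comp_emb measurableEmbedding_finCons).2 hG)

end FinCons

lemma integral_le_sqrt_integral_sq {Ω : Type*} [MeasurableSpace Ω] {μ : Measure Ω}
    [IsProbabilityMeasure μ] {f : Ω → ℝ} (hf : MemLp f 2 μ) :
    ∫ ω, f ω ∂μ ≤ √(∫ ω, f ω ^ 2 ∂μ) := by
  have hvar := variance_nonneg f μ
  rw [variance_eq_sub hf] at hvar
  exact (le_abs_self _).trans (abs_le_sqrt (by simpa using hvar))

section SecondMoment

variable {X : Type*} [MeasurableSpace X] {μ : Measure X} [IsProbabilityMeasure μ]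
  {H : Type*} [NormedAddCommGroup H] [InnerProductSpace ℝ H] [CompleteSpace H]

lemma integral_norm_const_add_sq {Z : X → H} (hZ : MemLp Z 2 μ) (v : H) :
    ∫ x, ‖v + Z x‖ ^ 2 ∂μ = ‖v‖ ^ 2 + 2 * ⟪v, ∫ x, Z x ∂μ⟫ + ∫ x, ‖Z x‖ ^ 2 ∂μ := by
  have hZ1 : Integrable Z μ := hZ.integrable one_le_two
  simp_rw [norm_add_sq_real]
  rw [integral_add (f := fun x ↦ ‖v‖ ^ 2 + 2 * ⟪v, Z x⟫)
      ((integrable_const _).add ((hZ1.const_inner v).const_mul 2)) hZ.norm.integrable_sq,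
    integral_add (integrable_const _) ((hZ1.const_inner v).const_mul 2),
    integral_const_mul, integral_const, integral_inner hZ1]
  simp

lemma integral_norm_sub_integral_sq {Z : X → H} (hZ : MemLp Z 2 μ) :
    ∫ x, ‖Z x - ∫ x, Z x ∂μ‖ ^ 2 ∂μ = ∫ x, ‖Z x‖ ^ 2 ∂μ - ‖∫ x, Z x ∂μ‖ ^ 2 := by
  simp_rw [sub_eq_neg_add, integral_norm_const_add_sq hZ, inner_neg_left,
    real_inner_self_eq_norm_sq, norm_neg]
  ring

lemma integral_norm_sum_sq_pi {Y : X → H} (hY : MemLp Y 2 μ) (hY0 : ∫ x, Y x ∂μ = 0) :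
    ∀ n : ℕ, ∫ xs, ‖∑ i : Fin n, Y (xs i)‖ ^ 2 ∂(Measure.pi fun _ ↦ μ) =
      n * ∫ x, ‖Y x‖ ^ 2 ∂μ
  | 0 => by simp
  | n + 1 => by
    have hsum (m : ℕ) : MemLp (fun xs : Fin m → X ↦ ∑ i, Y (xs i)) 2 (Measure.pi fun _ ↦ μ) :=
      memLp_finsetSum _ fun i _ ↦ hY.comp_measurePreserving (measurePreserving_eval _ i)
    rw [integral_pi_fin_succ (hsum _).norm.integrable_sq]
    simp_rw [Fin.sum_univ_succ, Fin.cons_zero, Fin.cons_succ, add_comm (Y _),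
      integral_norm_const_add_sq hY, hY0, inner_zero_right, mul_zero, add_zero]
    rw [integral_add (hsum n).norm.integrable_sq (integrable_const _),
      integral_norm_sum_sq_pi hY hY0 n, integral_const, probReal_univ, one_smul]
    push_cast
    ring

lemma integral_norm_average_le_of_integral_eq_zero {Y : X → H} (hY : MemLp Y 2 μ)
    (hY0 : ∫ x, Y x ∂μ = 0) (n : ℕ) :
    ∫ xs, ‖(1 / (n : ℝ)) • ∑ i, Y (xs i)‖ ∂(Measure.pi fun _ : Fin n ↦ μ) ≤
      √((∫ x, ‖Y x‖ ^ 2 ∂μ) / n) := by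
  have hsum : MemLp (fun xs : Fin n → X ↦ (1 / (n : ℝ)) • ∑ i, Y (xs i)) 2
      (Measure.pi fun _ ↦ μ) :=
    (memLp_finsetSum _ fun i _ ↦
      hY.comp_measurePreserving (measurePreserving_eval _ i)).const_smul _
  have hsq : ∫ xs, ‖(1 / (n : ℝ)) • ∑ i, Y (xs i)‖ ^ 2 ∂(Measure.pi fun _ : Fin n ↦ μ) =
      (∫ x, ‖Y x‖ ^ 2 ∂μ) / n := by
    simp_rw [norm_smul, mul_pow]
    rw [integral_const_mul, integral_norm_sum_sq_pi hY hY0]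
    rcases Nat.eq_zero_or_pos n with rfl | hn
    · simp
    · rw [norm_div, norm_one, RCLike.norm_natCast]
      field_simp
  rw [← hsq]
  exact integral_le_sqrt_integral_sq hsum.norm

lemma integral_norm_average_sub_integral_le {Z : X → H} (hZ : AEStronglyMeasurable Z μ) {R : ℝ}
    (hZR : ∀ x, ‖Z x‖ ≤ R) {n : ℕ} (hn : 0 < n) :
    ∫ xs, ‖(1 / (n : ℝ)) • ∑ i, Z (xs i) - ∫ x, Z x ∂μ‖ ∂(Measure.pi fun _ : Fin n ↦ μ) ≤
      R / √n := by
  have hZ2 : MemLp Z 2 μ := .of_bound hZ R (ae_of_all _ hZR)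
  have hR : 0 ≤ R := (norm_nonneg _).trans (hZR (nonempty_of_isProbabilityMeasure μ).some)
  have hmean_zero : ∫ x, (Z x - ∫ x, Z x ∂μ) ∂μ = 0 := by
    simp [integral_sub (hZ2.integrable one_le_two) (integrable_const _)]
  have hvar_le : ∫ x, ‖Z x - ∫ x, Z x ∂μ‖ ^ 2 ∂μ ≤ R ^ 2 := by
    have : ∫ x, ‖Z x‖ ^ 2 ∂μ ≤ R ^ 2 := by
      simpa using integral_mono hZ2.norm.integrable_sq (integrable_const (R ^ 2))
        fun x ↦ pow_le_pow_left₀ (norm_nonneg _) (hZR x) 2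
    rw [integral_norm_sub_integral_sq hZ2]
    linarith [sq_nonneg ‖∫ x, Z x ∂μ‖]
  have hcenter (xs : Fin n → X) : (1 / (n : ℝ)) • ∑ i, Z (xs i) - ∫ x, Z x ∂μ =
      (1 / (n : ℝ)) • ∑ i, (Z (xs i) - ∫ x, Z x ∂μ) := by
    rw [Finset.sum_sub_distrib, smul_sub, Finset.sum_const, Finset.card_univ, Fintype.card_fin,
      ← Nat.cast_smul_eq_nsmul ℝ, smul_smul, one_div_mul_cancel (by positivity), one_smul]
  simp_rw [hcenter]
  calc _ ≤ √((∫ x, ‖Z x - ∫ x, Z x ∂μ‖ ^ 2 ∂μ) / n) :=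
        integral_norm_average_le_of_integral_eq_zero (hZ2.sub (memLp_const _)) hmean_zero n
    _ ≤ √(R ^ 2 / n) := by gcongr
    _ = R / √n := by rw [sqrt_div' _ (Nat.cast_nonneg n), sqrt_sq hR]

end SecondMoment

def HasBoundedDifferences {ι X : Type*} [DecidableEq ι] (f : (ι → X) → ℝ) (c : ℝ) : Prop :=
  ∀ x i y, |f x - f (Function.update x i y)| ≤ c

lemma HasBoundedDifferences.finCons_mem_Icc {X : Type*} [Nonempty X] {n : ℕ}
    {f : (Fin (n + 1) → X) → ℝ} {c K : ℝ} (hK : ∀ x, |f x| ≤ K)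
    (hfc : HasBoundedDifferences f c) (xs : Fin n → X) (y : X) :
    f (Fin.cons y xs) ∈ Set.Icc (⨅ y', f (Fin.cons y' xs)) ((⨅ y', f (Fin.cons y' xs)) + c) := by
  have hbdd : BddBelow (Set.range fun y' ↦ f (Fin.cons y' xs)) :=
    ⟨-K, by rintro _ ⟨y', rfl⟩; exact (abs_le.1 (hK _)).1⟩
  have hle_inf : f (Fin.cons y xs) - c ≤ ⨅ y', f (Fin.cons y' xs) :=
    le_ciInf fun y' ↦ by
      have := (abs_le.1 (hfc (Fin.cons y xs) 0 y')).2
      rw [Fin.update_cons_zero] at this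
      linarith
  exact ⟨ciInf_le hbdd y, by linarith⟩

lemma integrable_exp_mul_sub_integral_of_abs_le {Ω : Type*} [MeasurableSpace Ω] {ν : Measure Ω}
    [IsFiniteMeasure ν] {g : Ω → ℝ} {K : ℝ} (hg : Measurable g) (hK : ∀ ω, |g ω| ≤ K) (t : ℝ) :
    Integrable (fun ω ↦ exp (t * (g ω - ∫ ω', g ω' ∂ν))) ν :=
  integrable_exp_mul_of_mem_Icc (a := -K - ∫ ω', g ω' ∂ν) (b := K - ∫ ω', g ω' ∂ν)
    (hg.sub_const _).aemeasurable
    (ae_of_all _ fun ω ↦ ⟨by linarith [(abs_le.1 (hK ω)).1], by linarith [(abs_le.1 (hK ω)).2]⟩)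

section McDiarmid

variable {X : Type*} [MeasurableSpace X] {μ : Measure X} [IsProbabilityMeasure μ] {K : ℝ}

lemma HasBoundedDifferences.integral_finCons {n : ℕ} {f : (Fin (n + 1) → X) → ℝ} {c : ℝ}
    (hf : Measurable f) (hK : ∀ x, |f x| ≤ K) (hfc : HasBoundedDifferences f c) :
    HasBoundedDifferences (fun xs : Fin n → X ↦ ∫ y, f (Fin.cons y xs) ∂μ) c := by
  intro xs i y
  have hint (xs : Fin n → X) : Integrable (fun y ↦ f (Fin.cons y xs)) μ :=
    .of_bound (hf.comp (measurable_finCons_left xs)).aestronglyMeasurable K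
      (ae_of_all _ fun _ ↦ hK _)
  have hdiff (y' : X) :
      ‖f (Fin.cons y' xs) - f (Fin.cons y' (Function.update xs i y))‖ ≤ c := by
    rw [Real.norm_eq_abs, Fin.cons_update]
    exact hfc _ _ _
  rw [← integral_sub (hint _) (hint _), ← Real.norm_eq_abs]
  simpa using norm_integral_le_of_norm_le_const (ae_of_all μ hdiff)

theorem HasBoundedDifferences.hasSubgaussianMGF_sub_integral {n : ℕ} {f : (Fin n → X) → ℝ}
    {c : ℝ≥0} (hf : Measurable f) (hK : ∀ x, |f x| ≤ K) (hfc : HasBoundedDifferences f c) :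
    HasSubgaussianMGF (fun x ↦ f x - ∫ x', f x' ∂(Measure.pi fun _ ↦ μ)) (n * (c / 2) ^ 2)
      (Measure.pi fun _ ↦ μ) := by
  induction n with
  | zero =>
    have hf0 (x : Fin 0 → X) : f x - ∫ x', f x' ∂(Measure.pi fun _ ↦ μ) = 0 := by
      simp [Subsingleton.elim _ x]
    simp [hf0, HasSubgaussianMGF.fun_zero]
  | succ n ih =>
    have : Nonempty X := nonempty_of_isProbabilityMeasure μ
    set g : (Fin n → X) → ℝ := fun xs ↦ ∫ y, f (Fin.cons y xs) ∂μ
    have hg : Measurable g :=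
      (hf.comp measurableEmbedding_finCons.measurable).stronglyMeasurable.integral_prod_left'
        |>.measurable
    have hgK (xs : Fin n → X) : |g xs| ≤ K := by
      rw [← Real.norm_eq_abs]
      simpa using norm_integral_le_of_norm_le_const (μ := μ)
        (ae_of_all _ fun y ↦ (Real.norm_eq_abs _).trans_le (hK (Fin.cons y xs)))
    have hg_subG := ih hg hgK (hfc.integral_finCons hf hK)
    -- Hoeffding's lemma: each section of `f` ranges over an interval of length `c`.
    have hsection_subG (xs : Fin n → X) :
        HasSubgaussianMGF (fun y ↦ f (Fin.cons y xs) - g xs) ((c / 2) ^ 2) μ := by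
      simpa using hasSubgaussianMGF_of_mem_Icc (hf.comp (measurable_finCons_left xs)).aemeasurable
        (ae_of_all μ (hfc.finCons_mem_Icc hK xs))
    have hmean : ∫ x, f x ∂(Measure.pi fun _ ↦ μ) = ∫ xs, g xs ∂(Measure.pi fun _ ↦ μ) :=
      integral_pi_fin_succ (.of_bound hf.aestronglyMeasurable K (ae_of_all _ hK))
    refine ⟨integrable_exp_mul_sub_integral_of_abs_le hf hK, fun t ↦ ?_⟩
    calc mgf (fun x ↦ f x - ∫ x', f x' ∂(Measure.pi fun _ ↦ μ)) (Measure.pi fun _ ↦ μ) t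
        = ∫ xs, ∫ y, exp (t * (f (Fin.cons y xs) - ∫ x', f x' ∂(Measure.pi fun _ ↦ μ))) ∂μ
            ∂(Measure.pi fun _ ↦ μ) :=
          integral_pi_fin_succ (integrable_exp_mul_sub_integral_of_abs_le hf hK t)
      _ = ∫ xs, exp (t * (g xs - ∫ xs', g xs' ∂(Measure.pi fun _ ↦ μ))) *
            mgf (fun y ↦ f (Fin.cons y xs) - g xs) μ t ∂(Measure.pi fun _ ↦ μ) := by
          refine integral_congr_ae (ae_of_all _ fun xs ↦ ?_)
          simp only [mgf, ← integral_const_mul, ← exp_add, hmean]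
          congr with y
          congr 1
          ring
      _ ≤ ∫ xs, exp (t * (g xs - ∫ xs', g xs' ∂(Measure.pi fun _ ↦ μ))) *
            exp ((c / 2 : ℝ) ^ 2 * t ^ 2 / 2) ∂(Measure.pi fun _ ↦ μ) :=
          integral_mono_of_nonneg (ae_of_all _ fun _ ↦ mul_nonneg (exp_pos _).le mgf_nonneg)
            ((hg_subG.integrable_exp_mul t).mul_const _)
            (ae_of_all _ fun xs ↦ mul_le_mul_of_nonneg_left
              (by simpa using (hsection_subG xs).mgf_le t) (exp_pos _).le)
      _ ≤ exp (n * (c / 2 : ℝ) ^ 2 * t ^ 2 / 2) * exp ((c / 2 : ℝ) ^ 2 * t ^ 2 / 2) := by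
          rw [integral_mul_const]
          gcongr
          simpa [mgf] using hg_subG.mgf_le t
      _ = exp ((((n + 1 : ℕ) * (c / 2) ^ 2 : ℝ≥0) : ℝ) * t ^ 2 / 2) := by
          rw [← exp_add]
          congr 1
          push_cast
          ring

end McDiarmid

lemma ProbabilityTheory.HasSubgaussianMGF.ofReal_one_sub_le_measure_le {Ω : Type*}
    [MeasurableSpace Ω] {μ : Measure Ω} [IsProbabilityMeasure μ] {Y : Ω → ℝ} {σ : ℝ≥0}
    (h : HasSubgaussianMGF Y σ μ) (hσ : σ ≠ 0) {δ : ℝ} (hδ0 : 0 < δ) (hδ1 : δ ≤ 1) :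
    ENNReal.ofReal (1 - δ) ≤ μ {ω | Y ω ≤ √(2 * σ * log (1 / δ))} := by
  set ε := √(2 * σ * log (1 / δ))
  have hlog : 0 ≤ log (1 / δ) := log_nonneg (one_le_one_div hδ0 hδ1)
  have htail : μ {ω | ε ≤ Y ω} ≤ ENNReal.ofReal δ := by
    rw [← ofReal_measureReal]
    refine ENNReal.ofReal_le_ofReal ((h.measure_ge_le (sqrt_nonneg _)).trans_eq ?_)
    have hσ' : (σ : ℝ) ≠ 0 := NNReal.coe_ne_zero.2 hσ
    rw [sq_sqrt (by positivity), show -(2 * σ * log (1 / δ)) / (2 * σ) = -log (1 / δ) by field_simp,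
      exp_neg, exp_log (by positivity), one_div, inv_inv]
  have hcompl : {ω | ε ≤ Y ω}ᶜ ⊆ {ω | Y ω ≤ ε} := fun ω (hω : ¬ε ≤ Y ω) ↦ (not_le.1 hω).le
  rw [ENNReal.ofReal_sub _ hδ0.le, ENNReal.ofReal_one, tsub_le_iff_right]
  calc (1 : ℝ≥0∞) = μ Set.univ := measure_univ.symm
    _ ≤ μ {ω | ε ≤ Y ω} + μ {ω | ε ≤ Y ω}ᶜ := measure_univ_le_add_compl _
    _ ≤ ENNReal.ofReal δ + μ {ω | Y ω ≤ ε} := add_le_add htail (measure_mono hcompl)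
    _ = μ {ω | Y ω ≤ ε} + ENNReal.ofReal δ := add_comm _ _

section Average

variable {X H : Type*} [NormedAddCommGroup H] [NormedSpace ℝ H] {Z : X → H} {R : ℝ} {n : ℕ}

lemma norm_average_le (hZR : ∀ x, ‖Z x‖ ≤ R) (hR : 0 ≤ R) (xs : Fin n → X) :
    ‖(1 / (n : ℝ)) • ∑ i, Z (xs i)‖ ≤ R := by
  rcases Nat.eq_zero_or_pos n with rfl | hn
  · simpa using hR
  calc ‖(1 / (n : ℝ)) • ∑ i, Z (xs i)‖ ≤ 1 / n * ∑ _i : Fin n, R := by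
        rw [norm_smul, Real.norm_of_nonneg (by positivity)]
        gcongr
        exact (norm_sum_le _ _).trans (Finset.sum_le_sum fun i _ ↦ hZR (xs i))
    _ = R := by simp [field]

lemma hasBoundedDifferences_norm_average_sub (hZR : ∀ x, ‖Z x‖ ≤ R) (m : H) :
    HasBoundedDifferences (fun xs : Fin n → X ↦ ‖(1 / (n : ℝ)) • ∑ i, Z (xs i) - m‖)
      (2 * R / n) := by
  intro xs i y
  have hsum : ∑ j, Z (xs j) - ∑ j, Z (Function.update xs i y j) = Z (xs i) - Z y := by
    simp_rw [Function.apply_update (fun _ ↦ Z)]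
    rw [Finset.sum_update_of_mem (Finset.mem_univ i),
      Finset.sum_eq_add_sum_sdiff_singleton_of_mem (Finset.mem_univ i)]
    abel
  calc _ ≤ ‖(1 / (n : ℝ)) • ∑ j, Z (xs j) - m -
          ((1 / (n : ℝ)) • ∑ j, Z (Function.update xs i y j) - m)‖ := abs_norm_sub_norm_le _ _
    _ = 1 / n * ‖Z (xs i) - Z y‖ := by
        rw [sub_sub_sub_cancel_right, ← smul_sub, hsum, norm_smul,
          Real.norm_of_nonneg (by positivity)]
    _ ≤ 1 / n * (R + R) := by gcongr; exact (norm_sub_le _ _).trans (add_le_add (hZR _) (hZR _))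
    _ = 2 * R / n := by ring

end Average

theorem ofReal_one_sub_le_measure_norm_average_sub_integral_le {X H : Type*} [MeasurableSpace X]
    [NormedAddCommGroup H] [InnerProductSpace ℝ H] [CompleteSpace H] {μ : Measure X}
    [IsProbabilityMeasure μ] {Z : X → H} (hZ : StronglyMeasurable Z) {R : ℝ} (hR : 0 < R)
    (hZR : ∀ x, ‖Z x‖ ≤ R) {n : ℕ} (hn : 0 < n) {δ : ℝ} (hδ0 : 0 < δ) (hδ1 : δ ≤ 1) :
    ENNReal.ofReal (1 - δ) ≤ (Measure.pi fun _ : Fin n ↦ μ)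
      {xs | ‖(1 / (n : ℝ)) • ∑ i, Z (xs i) - ∫ x, Z x ∂μ‖ ≤
        R / √n * (1 + √(2 * log (1 / δ)))} := by
  set f := fun xs : Fin n → X ↦ ‖(1 / (n : ℝ)) • ∑ i, Z (xs i) - ∫ x, Z x ∂μ‖
  have hf : Measurable f :=
    (((Finset.stronglyMeasurable_fun_sum _ fun i _ ↦
      hZ.comp_measurable (measurable_pi_apply i)).const_smul (1 / (n : ℝ))).sub
      stronglyMeasurable_const).norm.measurable
  have hfK (xs : Fin n → X) : |f xs| ≤ R + ‖∫ x, Z x ∂μ‖ := by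
    rw [abs_of_nonneg (norm_nonneg _)]
    exact (norm_sub_le _ _).trans (add_le_add_left (norm_average_le hZR hR.le xs) _)
  set c : ℝ≥0 := (2 * R / n).toNNReal
  have hc : (c : ℝ) = 2 * R / n := Real.coe_toNNReal _ (by positivity)
  have hc0 : 0 < c := by rw [← NNReal.coe_pos, hc]; positivity
  have hfc : HasBoundedDifferences f c := hc ▸ hasBoundedDifferences_norm_average_sub hZR _
  have hmean := integral_norm_average_sub_integral_le (μ := μ) hZ.aestronglyMeasurable hZR hn
  have htail := (hfc.hasSubgaussianMGF_sub_integral (μ := μ) hf hfK).ofReal_one_sub_le_measure_le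
    (by positivity) hδ0 hδ1
  have hdev : √(2 * ((n * (c / 2) ^ 2 : ℝ≥0) : ℝ) * log (1 / δ)) =
      R / √n * √(2 * log (1 / δ)) := by
    rw [← sqrt_sq (by positivity : 0 ≤ R / √n), ← sqrt_mul (sq_nonneg _)]
    congr 1
    push_cast
    rw [hc, div_pow R, sq_sqrt (Nat.cast_nonneg n)]
    field_simp
  refine htail.trans (measure_mono fun xs hxs ↦ ?_)
  simp only [Set.mem_ofPred_eq, hdev] at hxs ⊢
  linarith

theorem weighted_embedding_mean_concentration_general
    {X : Type*} [MeasurableSpace X]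
    {H : Type*} [NormedAddCommGroup H] [InnerProductSpace ℝ H] [CompleteSpace H]
    (M B : ℝ) (hM : 0 < M) (hB : 0 < B)
    (φ : X → H) (hφsm : StronglyMeasurable φ) (hφ : ∀ x, ‖φ x‖ ≤ Real.sqrt M)
    (Ps : Measure X) [IsProbabilityMeasure Ps]
    (w : X → ℝ) (hwmeas : Measurable w) (hw : ∀ x, 0 ≤ w x ∧ w x ≤ B)
    (ns : ℕ) (hns : 0 < ns)
    (μt' : H) (hμt' : μt' = ∫ x, w x • φ x ∂Ps)
    (δ : ℝ) (hδ : δ ∈ Set.Ioo (0 : ℝ) 1) :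
    (Measure.pi fun _ : Fin ns => Ps)
      {xs | ‖(1 / (ns : ℝ)) • ∑ i, w (xs i) • φ (xs i) - μt'‖
          ≤ B * Real.sqrt (M / ns) * (1 + Real.sqrt (2 * Real.log (1 / δ)))}
      ≥ ENNReal.ofReal (1 - δ) := by
  have hZR (x : X) : ‖w x • φ x‖ ≤ B * √M := by
    rw [norm_smul, Real.norm_of_nonneg (hw x).1]
    exact mul_le_mul (hw x).2 (hφ x) (norm_nonneg _) hB.le
  have hbound : B * √M / √ns = B * √(M / ns) := by
    rw [sqrt_div' _ (Nat.cast_nonneg _), mul_div_assoc]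
  have h := ofReal_one_sub_le_measure_norm_average_sub_integral_le (μ := Ps)
    (Z := fun x ↦ w x • φ x) (hwmeas.stronglyMeasurable.smul hφsm) (by positivity) hZR hns
    hδ.1 hδ.2.le
  rwa [hbound, ← hμt'] at h

/-- Lemma 1: with probability at least `1 − δ` over an i.i.d. sample of size `n_s`
from `P_s`, the weighted empirical embedding mean is within
`B √(M/n_s) (1 + √(2 log(1/δ)))` of the population weighted embedding mean `μ_{t'}`. -/
theorem weighted_embedding_mean_concentration
    {X : Type*} [MeasurableSpace X]
    {H : Type*} [NormedAddCommGroup H] [InnerProductSpace ℝ H] [CompleteSpace H]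
    (M B : ℝ) (hM : 0 < M) (hB : 0 < B)
    (φ : X → H) (hφsm : StronglyMeasurable φ) (hφ : ∀ x, ‖φ x‖ ≤ Real.sqrt M)
    (Ps : Measure X) [IsProbabilityMeasure Ps]
    (w : X → ℝ) (hwmeas : Measurable w) (hw : ∀ x, 0 ≤ w x ∧ w x ≤ B)
    (hint : Integrable (fun x => w x • φ x) Ps)
    (ns : ℕ) (hns : 0 < ns)
    (μt' : H) (hμt' : μt' = ∫ x, w x • φ x ∂Ps)
    (δ : ℝ) (hδ : δ ∈ Set.Ioo (0 : ℝ) 1) :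
    (Measure.pi fun _ : Fin ns => Ps)
      {xs | ‖(1 / (ns : ℝ)) • ∑ i, w (xs i) • φ (xs i) - μt'‖
          ≤ B * Real.sqrt (M / ns) * (1 + Real.sqrt (2 * Real.log (1 / δ)))}
      ≥ ENNReal.ofReal (1 - δ) :=
  weighted_embedding_mean_concentration_general M B hM hB φ hφsm hφ Ps w hwmeas hw ns hns μt' hμt' δ
    hδ
end

section
/- Let Q be a probability measure on X such that φ is Bochner integrable with respect to Q, with embedding mean μ_Q = ∫ φ dQ, and let ν ∈ H be any vector with ‖μ_Q − ν‖ ≤ ε. Let the loss ℓ : X → ℝ be induced by an element F ∈ H of the RKHS, i.e., ℓ(x) = ⟪F, φ(x)⟫ for all x. Then ∫ ℓ dQ = ⟪F, μ_Q⟫ ≤ ⟪F, ν⟫ + ε ‖F‖. In particular, if ν is the embedding mean of a (possibly weighted empirical) probability measure P̂, then E^Q[ℓ] ≤ E^{P̂}[ℓ] + ε ‖F‖, so the worst-case risk over the MMD ball of radius ε centered at P̂ is at most E^{P̂}[ℓ] + ε ‖F‖. -/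
open MeasureTheory
open scoped RealInnerProductSpace

theorem real_inner_le_inner_add_mul_norm_of_norm_sub_le
    {H : Type*} [NormedAddCommGroup H] [InnerProductSpace ℝ H]
    {a b : H} {ε : ℝ} (hab : ‖a - b‖ ≤ ε) (F : H) :
    ⟪F, a⟫ ≤ ⟪F, b⟫ + ε * ‖F‖ :=
  calc ⟪F, a⟫ = ⟪F, b⟫ + ⟪F, a - b⟫ := by rw [inner_sub_right]; ring
    _ ≤ ⟪F, b⟫ + ‖a - b‖ * ‖F‖ := by
      rw [mul_comm]; gcongr; exact real_inner_le_norm F (a - b)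
    _ ≤ ⟪F, b⟫ + ε * ‖F‖ := by gcongr

theorem risk_bound_via_embedding_means_general
    {X : Type*} [MeasurableSpace X]
    {H : Type*} [NormedAddCommGroup H] [InnerProductSpace ℝ H] [CompleteSpace H]
    (φ : X → H)
    (Q : Measure X)
    (hφint : Integrable φ Q)
    (μQ : H) (hμQ : μQ = ∫ x, φ x ∂Q)
    (ν : H) (ε : ℝ) (hν : ‖μQ - ν‖ ≤ ε)
    (ℓ : X → ℝ) (F : H) (hℓ : ∀ x, ℓ x = ⟪F, φ x⟫) :
    (∫ x, ℓ x ∂Q) = ⟪F, μQ⟫ ∧ ⟪F, μQ⟫ ≤ ⟪F, ν⟫ + ε * ‖F‖ := by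
  refine ⟨?_, real_inner_le_inner_add_mul_norm_of_norm_sub_le hν F⟩
  simp only [hℓ, hμQ]
  exact integral_inner hφint F

/-- If the loss `ℓ` is induced by `F ∈ H` (i.e. `ℓ(x) = ⟪F, φ(x)⟫`) and the embedding
mean `μ_Q` of `Q` is within `ε` of `ν`, then
`∫ ℓ dQ = ⟪F, μ_Q⟫ ≤ ⟪F, ν⟫ + ε ‖F‖`. -/
theorem risk_bound_via_embedding_means
    {X : Type*} [MeasurableSpace X]
    {H : Type*} [NormedAddCommGroup H] [InnerProductSpace ℝ H] [CompleteSpace H]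
    (φ : X → H)
    (Q : Measure X) [IsProbabilityMeasure Q]
    (hφint : Integrable φ Q)
    (μQ : H) (hμQ : μQ = ∫ x, φ x ∂Q)
    (ν : H) (ε : ℝ) (hν : ‖μQ - ν‖ ≤ ε)
    (ℓ : X → ℝ) (F : H) (hℓ : ∀ x, ℓ x = ⟪F, φ x⟫) :
    (∫ x, ℓ x ∂Q) = ⟪F, μQ⟫ ∧ ⟪F, μQ⟫ ≤ ⟪F, ν⟫ + ε * ‖F‖ :=
  risk_bound_via_embedding_means_general φ Q hφint μQ hμQ ν ε hν ℓ F hℓ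
end

section
/- (Theorem 1, risk part.) Let P_s and P_t be probability measures on X with P_t absolutely continuous with respect to P_s, density ratio w = dP_t/dP_s satisfying 0 ≤ w(x) ≤ B for all x, and φ Bochner integrable with respect to P_t. Let x_1,…,x_{n_s} be i.i.d. from P_s and, independently, z_1,…,z_{n_t} be i.i.d. from P_t. Let the loss ℓ : X → ℝ satisfy ℓ(x) = ⟪F, φ(x)⟫ for some F ∈ H. For δ ∈ (0,1) set ε_{t'} = √M · ( √(B²/n_s + 1/n_t) + √(1/n_t) ) · (1 + √(2 log(1/δ))). Then with probability at least 1 − 2δ, the target population risk is bounded by the weighted empirical source risk plus ε_{t'} ‖F‖: ∫ ℓ dP_t ≤ (1/n_s) Σ_{i=1}^{n_s} w(x_i) ℓ(x_i) + ε_{t'} ‖F‖. -/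
/-!
Since `w = dP_t/dP_s`, the target risk `∫ ℓ dP_t` is the source mean of `w ℓ`, and
`|w ℓ| ≤ B √M ‖F‖` by Cauchy–Schwarz. Hoeffding's inequality for the i.i.d. source sample then
bounds the target risk, with probability at least `1 - δ`, by the weighted empirical risk plus
`2 B √M ‖F‖ √(log (1/δ) / (2 n_s))`, and this radius is dominated by `ε ‖F‖`. The event does not
involve the target sample at all.
-/

open MeasureTheory ProbabilityTheory Real
open scoped RealInnerProductSpace

theorem integral_withDensity_ofReal_eq_integral_mul {α : Type*} [MeasurableSpace α]
    {μ : Measure α} {f : α → ℝ} (hf : Measurable f) (hf0 : 0 ≤ᵐ[μ] f) (g : α → ℝ) :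
    ∫ x, g x ∂μ.withDensity (fun x => ENNReal.ofReal (f x)) = ∫ x, f x * g x ∂μ := by
  rw [integral_withDensity_eq_integral_toReal_smul hf.ennreal_ofReal
    (ae_of_all _ fun _ => ENNReal.ofReal_lt_top)]
  refine integral_congr_ae (hf0.mono fun x hx => ?_)
  simp only [ENNReal.toReal_ofReal hx, smul_eq_mul]

theorem MeasureTheory.Measure.prod_setOf_fst {α β : Type*} [MeasurableSpace α] [MeasurableSpace β]
    (μ : Measure α) (ν : Measure β) [IsProbabilityMeasure ν] (P : α → Prop) :
    μ.prod ν {p | P p.1} = μ {x | P x} := by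
  change μ.prod ν (Prod.fst ⁻¹' {x | P x}) = _
  rw [← Set.prod_univ, Measure.prod_prod, measure_univ, mul_one]

section Hoeffding

variable {Ω : Type*} [MeasurableSpace Ω] {μ : Measure Ω} [IsProbabilityMeasure μ]
  {Z : Ω → ℝ} {a b : ℝ}

theorem measureReal_pi_sampleMean_add_le_integral_le (hZ : AEMeasurable Z μ)
    (hab : ∀ᵐ x ∂μ, Z x ∈ Set.Icc a b) {n : ℕ} (hn : 0 < n) {t : ℝ} (ht : 0 ≤ t) :
    (Measure.pi fun _ : Fin n => μ).real {v | (1 / n) * ∑ i, Z (v i) + t ≤ ∫ x, Z x ∂μ}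
      ≤ exp (-2 * n * t ^ 2 / (b - a) ^ 2) := by
  have hn' : (0 : ℝ) < n := by exact_mod_cast hn
  set I := ∫ x, Z x ∂μ
  have hsubG : HasSubgaussianMGF (fun x => I - Z x) ((‖-a - -b‖₊ / 2) ^ 2) μ := by
    refine (hasSubgaussianMGF_of_mem_Icc hZ.neg
      (hab.mono fun x hx => ⟨neg_le_neg hx.2, neg_le_neg hx.1⟩)).congr (ae_of_all _ fun x => ?_)
    simp only [Pi.neg_apply, integral_neg]
    ring
  have hsubG_pi (i : Fin n) : HasSubgaussianMGF (fun v => I - Z (v i))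
      ((‖-a - -b‖₊ / 2) ^ 2) (Measure.pi fun _ => μ) := by
    have heval := measurePreserving_eval (fun _ : Fin n => μ) i
    rw [← heval.map_eq] at hsubG
    exact hsubG.of_map (Y := Function.eval i) heval.measurable.aemeasurable
  have hindep : iIndepFun (fun (i : Fin n) v => I - Z (v i)) (Measure.pi fun _ => μ) :=
    iIndepFun_pi (X := fun _ x => I - Z x) fun _ => aemeasurable_const.sub hZ
  have hevent : {v : Fin n → Ω | (1 / n) * ∑ i, Z (v i) + t ≤ I}
      = {v | n * t ≤ ∑ i, (I - Z (v i))} := by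
    ext v
    have hscale : n * ((1 / n) * ∑ i, Z (v i) + t) = ∑ i, Z (v i) + n * t := by
      field_simp
    simp only [Set.mem_ofPred_eq, Finset.sum_sub_distrib, Finset.sum_const, Finset.card_univ,
      Fintype.card_fin, nsmul_eq_mul]
    rw [← mul_le_mul_iff_right₀ hn', hscale]
    constructor <;> intro <;> linarith
  rw [hevent]
  refine (HasSubgaussianMGF.measure_sum_ge_le_of_iIndepFun hindep (s := Finset.univ)
    (fun i _ => hsubG_pi i) (mul_nonneg hn'.le ht)).trans_eq ?_
  congr 1
  push_cast
  rw [Finset.sum_const, Finset.card_univ, Fintype.card_fin, nsmul_eq_mul, div_pow,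
    Real.norm_eq_abs, sq_abs, neg_sub_neg]
  rcases eq_or_ne (b - a) 0 with hba | hba
  · simp [hba]
  · field_simp

theorem ofReal_one_sub_le_pi_integral_le_sampleMean_add (hZ : AEMeasurable Z μ)
    (hab : ∀ᵐ x ∂μ, Z x ∈ Set.Icc a b) (hlt : a < b) {n : ℕ} (hn : 0 < n) {δ : ℝ} (hδ : 0 < δ)
    (hδ1 : δ ≤ 1) :
    ENNReal.ofReal (1 - δ) ≤ (Measure.pi fun _ : Fin n => μ)
      {v | ∫ x, Z x ∂μ ≤ (1 / n) * ∑ i, Z (v i) + (b - a) * √(log (1 / δ) / (2 * n))} := by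
  set t := (b - a) * √(log (1 / δ) / (2 * n)) with ht
  have hlog : 0 ≤ log (1 / δ) := log_nonneg (one_le_one_div hδ hδ1)
  have hn' : (0 : ℝ) < n := by exact_mod_cast hn
  have hexp : exp (-2 * n * t ^ 2 / (b - a) ^ 2) = δ := by
    have hba : b - a ≠ 0 := (sub_pos.2 hlt).ne'
    rw [ht, mul_pow, sq_sqrt (by positivity)]
    field_simp
    rw [one_div, log_inv, neg_neg, exp_log hδ]
  set A := {v : Fin n → Ω | ∫ x, Z x ∂μ ≤ (1 / n) * ∑ i, Z (v i) + t}
  have hAc : (Measure.pi fun _ : Fin n => μ) Aᶜ ≤ ENNReal.ofReal δ := by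
    have ht0 : 0 ≤ t := mul_nonneg (sub_pos.2 hlt).le (sqrt_nonneg _)
    calc (Measure.pi fun _ : Fin n => μ) Aᶜ
        ≤ (Measure.pi fun _ : Fin n => μ) {v | (1 / n) * ∑ i, Z (v i) + t ≤ ∫ x, Z x ∂μ} :=
          measure_mono fun v hv => by
            simp only [A, Set.mem_compl_iff, Set.mem_ofPred_eq, not_le] at hv
            exact hv.le
      _ = ENNReal.ofReal ((Measure.pi fun _ : Fin n => μ).real
            {v | (1 / n) * ∑ i, Z (v i) + t ≤ ∫ x, Z x ∂μ}) :=
          (ofReal_measureReal (measure_ne_top _ _)).symm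
      _ ≤ ENNReal.ofReal δ := by
        rw [← hexp]
        exact ENNReal.ofReal_le_ofReal
          (measureReal_pi_sampleMean_add_le_integral_le hZ hab hn ht0)
  calc ENNReal.ofReal (1 - δ) = 1 - ENNReal.ofReal δ := by
        rw [ENNReal.ofReal_sub _ hδ.le, ENNReal.ofReal_one]
    _ ≤ 1 - (Measure.pi fun _ : Fin n => μ) Aᶜ := tsub_le_tsub_left hAc _
    _ ≤ _ := by
      rw [tsub_le_iff_right, ← measure_univ (μ := Measure.pi fun _ : Fin n => μ),
        ← Set.union_compl_self A]
      exact measure_union_le _ _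

end Hoeffding

theorem two_mul_sqrt_div_le_sqrt_add_sqrt_mul_one_add_sqrt {B : ℝ} (hB : 0 ≤ B) (n m : ℕ)
    (L : ℝ) :
    2 * B * √(L / (2 * n)) ≤ (√(B ^ 2 / n + 1 / m) + √(1 / m)) * (1 + √(2 * L)) :=
  calc 2 * B * √(L / (2 * n)) = √(B ^ 2 / n) * √(2 * L) := by
        rw [← sqrt_mul (by positivity), ← sqrt_sq (by positivity : 0 ≤ 2 * B),
          ← sqrt_mul (sq_nonneg _)]
        congr 1
        ring
    _ ≤ (√(B ^ 2 / n + 1 / m) + √(1 / m)) * (1 + √(2 * L)) := by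
        gcongr
        · exact le_add_of_le_of_nonneg (sqrt_le_sqrt (le_add_of_nonneg_right (by positivity)))
            (sqrt_nonneg _)
        · exact le_add_of_nonneg_left zero_le_one

theorem target_risk_bounded_by_weighted_empirical_source_risk_general
    {X : Type*} [MeasurableSpace X]
    {H : Type*} [NormedAddCommGroup H] [InnerProductSpace ℝ H]
    (M B : ℝ) (hM : 0 < M) (hB : 0 < B)
    (φ : X → H) (hφsm : StronglyMeasurable φ) (hφ : ∀ x, ‖φ x‖ ≤ Real.sqrt M)
    (Ps Pt : Measure X) [IsProbabilityMeasure Ps] [IsProbabilityMeasure Pt]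
    (w : X → ℝ) (hwmeas : Measurable w) (hw : ∀ x, 0 ≤ w x ∧ w x ≤ B)
    (hPt : Pt = Ps.withDensity fun x => ENNReal.ofReal (w x))
    (ℓ : X → ℝ) (F : H) (hℓ : ∀ x, ℓ x = ⟪F, φ x⟫)
    (ns nt : ℕ) (hns : 0 < ns)
    (δ : ℝ) (hδ : δ ∈ Set.Ioo (0 : ℝ) 1)
    (ε : ℝ)
    (hε : ε = Real.sqrt M * (Real.sqrt (B ^ 2 / ns + 1 / nt) + Real.sqrt (1 / nt))
          * (1 + Real.sqrt (2 * Real.log (1 / δ)))) :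
    ((Measure.pi fun _ : Fin ns => Ps).prod (Measure.pi fun _ : Fin nt => Pt))
      {p : (Fin ns → X) × (Fin nt → X) |
        (∫ x, ℓ x ∂Pt) ≤ (1 / (ns : ℝ)) * ∑ i, w (p.1 i) * ℓ (p.1 i) + ε * ‖F‖}
      ≥ ENNReal.ofReal (1 - 2 * δ) := by
  obtain ⟨hδ0, hδ1⟩ := hδ
  rcases eq_or_ne F 0 with rfl | hF
  · simp [hℓ]
    linarith
  have hF0 : 0 < ‖F‖ := norm_pos_iff.2 hF
  have hc0 : 0 < √M * ‖F‖ * B := by positivity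
  set c := √M * ‖F‖ * B
  have hℓmeas : Measurable ℓ := by
    rw [funext hℓ]
    exact (stronglyMeasurable_const.inner hφsm).measurable
  have hZ (x : X) : w x * ℓ x ∈ Set.Icc (-c) c := abs_le.1 <| by
    calc |w x * ℓ x| = w x * |⟪F, φ x⟫| := by rw [abs_mul, abs_of_nonneg (hw x).1, hℓ]
      _ ≤ B * (‖F‖ * √M) := mul_le_mul (hw x).2
          ((abs_real_inner_le_norm _ _).trans (by gcongr; exact hφ x)) (abs_nonneg _) hB.le
      _ = c := by ring
  have hradius : (c - -c) * √(log (1 / δ) / (2 * ns)) ≤ ε * ‖F‖ :=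
    calc (c - -c) * √(log (1 / δ) / (2 * ns))
        = √M * ‖F‖ * (2 * B * √(log (1 / δ) / (2 * ns))) := by ring
      _ ≤ √M * ‖F‖ * ((√(B ^ 2 / ns + 1 / nt) + √(1 / nt)) * (1 + √(2 * log (1 / δ)))) :=
        mul_le_mul_of_nonneg_left
          (two_mul_sqrt_div_le_sqrt_add_sqrt_mul_one_add_sqrt hB.le ns nt _) (by positivity)
      _ = ε * ‖F‖ := by rw [hε]; ring
  have hrisk : ∫ x, ℓ x ∂Pt = ∫ x, w x * ℓ x ∂Ps := by
    rw [hPt, integral_withDensity_ofReal_eq_integral_mul hwmeas (ae_of_all _ fun x => (hw x).1)]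
  rw [ge_iff_le]
  calc ENNReal.ofReal (1 - 2 * δ) ≤ ENNReal.ofReal (1 - δ) := ENNReal.ofReal_le_ofReal (by linarith)
    _ ≤ _ := ofReal_one_sub_le_pi_integral_le_sampleMean_add (Z := fun x => w x * ℓ x)
        (hwmeas.mul hℓmeas).aemeasurable (ae_of_all _ hZ) (by linarith) hns hδ0 hδ1.le
    _ ≤ (Measure.pi fun _ : Fin ns => Ps)
          {v | ∫ x, ℓ x ∂Pt ≤ (1 / (ns : ℝ)) * ∑ i, w (v i) * ℓ (v i) + ε * ‖F‖} :=
        measure_mono fun v hv => by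
          simp only [Set.mem_ofPred_eq, hrisk] at hv ⊢
          linarith
    _ = _ := (Measure.prod_setOf_fst _ _ _).symm

/-- Theorem 1 (risk part): with probability at least `1 − 2δ`, the target population
risk is bounded by the weighted empirical source risk plus `ε_{t'} ‖F‖`. -/
theorem target_risk_bounded_by_weighted_empirical_source_risk
    {X : Type*} [MeasurableSpace X]
    {H : Type*} [NormedAddCommGroup H] [InnerProductSpace ℝ H] [CompleteSpace H]
    (M B : ℝ) (hM : 0 < M) (hB : 0 < B)
    (φ : X → H) (hφsm : StronglyMeasurable φ) (hφ : ∀ x, ‖φ x‖ ≤ Real.sqrt M)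
    (Ps Pt : Measure X) [IsProbabilityMeasure Ps] [IsProbabilityMeasure Pt]
    (w : X → ℝ) (hwmeas : Measurable w) (hw : ∀ x, 0 ≤ w x ∧ w x ≤ B)
    (hPt : Pt = Ps.withDensity fun x => ENNReal.ofReal (w x))
    (hint : Integrable φ Pt)
    (ℓ : X → ℝ) (F : H) (hℓ : ∀ x, ℓ x = ⟪F, φ x⟫)
    (ns nt : ℕ) (hns : 0 < ns) (hnt : 0 < nt)
    (δ : ℝ) (hδ : δ ∈ Set.Ioo (0 : ℝ) 1)
    (ε : ℝ)
    (hε : ε = Real.sqrt M * (Real.sqrt (B ^ 2 / ns + 1 / nt) + Real.sqrt (1 / nt))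
          * (1 + Real.sqrt (2 * Real.log (1 / δ)))) :
    ((Measure.pi fun _ : Fin ns => Ps).prod (Measure.pi fun _ : Fin nt => Pt))
      {p : (Fin ns → X) × (Fin nt → X) |
        (∫ x, ℓ x ∂Pt) ≤ (1 / (ns : ℝ)) * ∑ i, w (p.1 i) * ℓ (p.1 i) + ε * ‖F‖}
      ≥ ENNReal.ofReal (1 - 2 * δ) :=
  target_risk_bounded_by_weighted_empirical_source_risk_general M B hM hB φ hφsm hφ Ps Pt w hwmeas
    hw hPt ℓ F hℓ ns nt hns δ hδ ε hε
end

section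
/- (Theorem 2, generalization bound.) Let P_s and P_t be probability measures on X with P_t absolutely continuous with respect to P_s and density ratio w = dP_t/dP_s satisfying 0 ≤ w(x) ≤ B for all x, and suppose ‖φ(x)‖ ≤ 1 for all x. Let h, g : X → ℝ and suppose the squared loss ℓ(x) = (h(x) − g(x))² satisfies: ℓ(x) ≥ 0 for all x, ℓ is induced by an element L ∈ H (i.e., ℓ(x) = ⟪L, φ(x)⟫ for all x) with ‖L‖ ≤ 4η² (as holds in a Gaussian RKHS when ‖h‖_σ ≤ η and ‖g‖_σ ≤ η), and φ is Bochner integrable with respect to P_t. Let x_1,…,x_{n_s} be i.i.d. from P_s and, independently, z_1,…,z_{n_t} be i.i.d. from P_t, and for δ ∈ (0,1) set ε_{t'} = ( √(B²/n_s + 1/n_t) + √(1/n_t) ) · (1 + √(2 log(1/δ))). Then with probability at least 1 − 2δ, the target population risk R_t = ∫ ℓ dP_t and the empirical source risk R̂_s = (1/n_s) Σ_{i=1}^{n_s} ℓ(x_i) satisfy R_t ≤ B · R̂_s + 4η² · ε_{t'}. -/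
/-!
Importance weighting with `w = dP_t/dP_s ≤ B` bounds the target risk by `B` times the source
risk. The loss `ℓ = ⟪L, φ⟫` takes values in `[0, 4η²]`, so Hoeffding's inequality for the
`n_s` source samples shows that the source risk exceeds the empirical source risk by at least
`4η² ε / B` with probability at most `exp (-2 n_s ε² / B²)`, and the choice of `ε` makes this
at most `δ`. The target sample plays no role.
-/

open MeasureTheory ProbabilityTheory

section

variable {Ω : Type*} [MeasurableSpace Ω] {μ : Measure Ω}

lemma integral_withDensity_ofReal_le_mul_integral {w f : Ω → ℝ} {B : ℝ} (hw : Measurable w)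
    (hw0 : ∀ x, 0 ≤ w x) (hwB : ∀ x, w x ≤ B) (hf : Integrable f μ) (hf0 : ∀ x, 0 ≤ f x) :
    ∫ x, f x ∂μ.withDensity (fun x => ENNReal.ofReal (w x)) ≤ B * ∫ x, f x ∂μ := by
  rw [integral_withDensity_eq_integral_toReal_smul hw.ennreal_ofReal
    (ae_of_all _ fun _ => ENNReal.ofReal_lt_top), ← integral_const_mul]
  refine integral_mono_of_nonneg (ae_of_all _ fun x => ?_) (hf.const_mul B)
    (ae_of_all _ fun x => ?_)
  all_goals simp only [ENNReal.toReal_ofReal (hw0 x), smul_eq_mul]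
  exacts [mul_nonneg (hw0 x) (hf0 x), mul_le_mul_of_nonneg_right (hwB x) (hf0 x)]

lemma ofReal_one_sub_le_measure_compl [IsProbabilityMeasure μ] {s : Set Ω} {δ : ℝ}
    (hs : μ.real s ≤ δ) : ENNReal.ofReal (1 - δ) ≤ μ sᶜ := by
  have h_union : 1 ≤ μ.real s + μ.real sᶜ := by
    simpa [Set.union_compl_self] using measureReal_union_le (μ := μ) s sᶜ
  rw [← ofReal_measureReal]
  exact ENNReal.ofReal_le_ofReal (by linarith)

variable [IsProbabilityMeasure μ]

/-- Hoeffding's inequality. -/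
lemma measureReal_integral_sub_empiricalMean_ge_le {f : Ω → ℝ} {a b : ℝ} (hf : Measurable f)
    (hfab : ∀ x, f x ∈ Set.Icc a b) {n : ℕ} (hn : 0 < n) {t : ℝ} (ht : 0 ≤ t) :
    (Measure.pi fun _ : Fin n => μ).real {ω | t ≤ μ[f] - (n : ℝ)⁻¹ * ∑ i, f (ω i)}
      ≤ Real.exp (-2 * n * t ^ 2 / (b - a) ^ 2) := by
  set deviation : Fin n → (Fin n → Ω) → ℝ := fun i ω => μ[f] - f (ω i)
  have h_indep : iIndepFun deviation (Measure.pi fun _ => μ) :=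
    iIndepFun_pi (μ := fun _ => μ) (X := fun _ x => μ[f] - f x)
      fun _ => (measurable_const.sub hf).aemeasurable
  have h_subG (i : Fin n) :
      HasSubgaussianMGF (deviation i) ((‖b - a‖₊ / 2) ^ 2) (Measure.pi fun _ => μ) := by
    have hμ : HasSubgaussianMGF (fun x => μ[f] - f x) ((‖b - a‖₊ / 2) ^ 2) μ := by
      convert (hasSubgaussianMGF_of_mem_Icc (μ := μ) hf.aemeasurable (ae_of_all _ hfab)).neg
        using 1
      ext x
      simp
    exact HasSubgaussianMGF.of_map (μ := Measure.pi fun _ => μ) (Y := Function.eval i)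
      (X := fun x => μ[f] - f x) (measurable_pi_apply i).aemeasurable
      (by rwa [(measurePreserving_eval _ i).map_eq])
  have hn' : (0 : ℝ) < n := by exact_mod_cast hn
  calc _ = (Measure.pi fun _ => μ).real {ω | n * t ≤ ∑ i, deviation i ω} := by
        congr 1
        ext ω
        simp only [deviation, Finset.sum_sub_distrib, Finset.sum_const, Finset.card_univ,
          Fintype.card_fin, nsmul_eq_mul, Set.mem_ofPred_eq]
        rw [← mul_le_mul_iff_of_pos_left hn', mul_sub, ← mul_assoc, mul_inv_cancel₀ hn'.ne',
          one_mul]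
    _ ≤ _ := HasSubgaussianMGF.measure_sum_ge_le_of_iIndepFun h_indep (fun i _ => h_subG i)
          (mul_nonneg hn'.le ht)
    _ = _ := by
        rcases eq_or_ne (b - a) 0 with hab | hab
        · simp [hab]
        · push_cast
          simp only [Finset.sum_const, Finset.card_univ, Fintype.card_fin, nsmul_eq_mul,
            Real.norm_eq_abs, div_pow, sq_abs]
          field_simp

lemma ofReal_one_sub_exp_le_measure_integral_le_empiricalMean_add {f : Ω → ℝ} {a b : ℝ}
    (hf : Measurable f) (hfab : ∀ x, f x ∈ Set.Icc a b) {n : ℕ} (hn : 0 < n) {t : ℝ}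
    (ht : 0 ≤ t) :
    ENNReal.ofReal (1 - Real.exp (-2 * n * t ^ 2 / (b - a) ^ 2))
      ≤ (Measure.pi fun _ : Fin n => μ) {ω | μ[f] ≤ (n : ℝ)⁻¹ * ∑ i, f (ω i) + t} := by
  refine (ofReal_one_sub_le_measure_compl
    (measureReal_integral_sub_empiricalMean_ge_le hf hfab hn ht)).trans (measure_mono ?_)
  intro ω hω
  simp only [Set.mem_compl_iff, Set.mem_ofPred_eq, not_le] at hω ⊢
  linarith

end

lemma exp_neg_two_mul_sq_div_le {B δ : ℝ} {ns nt : ℕ} (hB : 0 < B) (hns : 0 < ns)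
    (hδ : δ ∈ Set.Ioo (0 : ℝ) 1) :
    Real.exp (-(2 * ns * ((√(B ^ 2 / ns + 1 / nt) + √(1 / nt))
      * (1 + √(2 * Real.log (1 / δ)))) ^ 2 / B ^ 2)) ≤ δ := by
  set l := Real.log (1 / δ)
  set ε := (√(B ^ 2 / ns + 1 / nt) + √(1 / nt)) * (1 + √(2 * l))
  have hl : 0 ≤ l := Real.log_nonneg (one_le_one_div hδ.1 hδ.2.le)
  have hns' : (0 : ℝ) < ns := by exact_mod_cast hns
  have h_sqrt : √(B ^ 2 / ns) * √(2 * l) ≤ ε := by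
    refine mul_le_mul ?_ (le_add_of_nonneg_left zero_le_one) (Real.sqrt_nonneg _)
      (by positivity)
    calc √(B ^ 2 / ns) ≤ √(B ^ 2 / ns + 1 / nt) :=
          Real.sqrt_le_sqrt (le_add_of_nonneg_right (by positivity))
      _ ≤ _ := le_add_of_nonneg_right (Real.sqrt_nonneg _)
  have h_sq : B ^ 2 / ns * (2 * l) ≤ ε ^ 2 := by
    have := pow_le_pow_left₀ (by positivity) h_sqrt 2
    rwa [mul_pow, Real.sq_sqrt (by positivity), Real.sq_sqrt (by positivity)] at this
  have h_log : l ≤ 2 * ns * ε ^ 2 / B ^ 2 := by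
    rw [le_div_iff₀ (by positivity)]
    rw [div_mul_eq_mul_div, div_le_iff₀ hns'] at h_sq
    nlinarith [sq_nonneg B]
  rw [← Real.exp_log hδ.1, Real.exp_le_exp, neg_le, ← Real.log_inv, ← one_div]
  exact h_log

open scoped RealInnerProductSpace

theorem generalization_bound_general
    {X : Type*} [MeasurableSpace X]
    {H : Type*} [NormedAddCommGroup H] [InnerProductSpace ℝ H]
    (B η : ℝ) (hB : 0 < B) (hη : 0 < η)
    (φ : X → H) (hφsm : StronglyMeasurable φ) (hφ : ∀ x, ‖φ x‖ ≤ 1)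
    (Ps Pt : Measure X) [IsProbabilityMeasure Ps] [IsProbabilityMeasure Pt]
    (w : X → ℝ) (hwmeas : Measurable w) (hw : ∀ x, 0 ≤ w x ∧ w x ≤ B)
    (hPt : Pt = Ps.withDensity fun x => ENNReal.ofReal (w x))
    (ℓ : X → ℝ)
    (hℓnonneg : ∀ x, 0 ≤ ℓ x)
    (L : H) (hℓL : ∀ x, ℓ x = ⟪L, φ x⟫) (hL : ‖L‖ ≤ 4 * η ^ 2)
    (ns nt : ℕ) (hns : 0 < ns)
    (δ : ℝ) (hδ : δ ∈ Set.Ioo (0 : ℝ) 1)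
    (ε : ℝ)
    (hε : ε = (Real.sqrt (B ^ 2 / ns + 1 / nt) + Real.sqrt (1 / nt))
          * (1 + Real.sqrt (2 * Real.log (1 / δ)))) :
    ((Measure.pi fun _ : Fin ns => Ps).prod (Measure.pi fun _ : Fin nt => Pt))
      {p : (Fin ns → X) × (Fin nt → X) |
        (∫ x, ℓ x ∂Pt) ≤ B * ((1 / (ns : ℝ)) * ∑ i, ℓ (p.1 i)) + 4 * η ^ 2 * ε}
      ≥ ENNReal.ofReal (1 - 2 * δ) := by
  set M := 4 * η ^ 2
  have hℓ_meas : Measurable ℓ := funext hℓL ▸ (stronglyMeasurable_const.inner hφsm).measurable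
  have hℓ_mem (x : X) : ℓ x ∈ Set.Icc 0 M := ⟨hℓnonneg x, hℓL x ▸
    (real_inner_le_norm L (φ x)).trans ((mul_le_of_le_one_right (norm_nonneg L) (hφ x)).trans hL)⟩
  have hRt : ∫ x, ℓ x ∂Pt ≤ B * Ps[ℓ] := hPt ▸ integral_withDensity_ofReal_le_mul_integral
    hwmeas (fun x => (hw x).1) (fun x => (hw x).2)
    (Integrable.of_mem_Icc 0 M hℓ_meas.aemeasurable (ae_of_all _ hℓ_mem)) hℓnonneg
  have h_tail : Real.exp (-2 * ns * (M * ε / B) ^ 2 / (M - 0) ^ 2) ≤ δ := by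
    have h_exponent : -2 * ns * (M * ε / B) ^ 2 / (M - 0) ^ 2 = -(2 * ns * ε ^ 2 / B ^ 2) := by
      have hM0 : 0 < M := by positivity
      rw [sub_zero]
      field_simp
    exact h_exponent ▸ hε ▸ exp_neg_two_mul_sq_div_le hB hns hδ
  have hε0 : 0 ≤ ε := hε ▸ by positivity
  set good := {ω : Fin ns → X | Ps[ℓ] ≤ (ns : ℝ)⁻¹ * ∑ i, ℓ (ω i) + M * ε / B}
  calc ENNReal.ofReal (1 - 2 * δ)
      ≤ ENNReal.ofReal (1 - Real.exp (-2 * ns * (M * ε / B) ^ 2 / (M - 0) ^ 2)) :=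
        ENNReal.ofReal_le_ofReal (by linarith [hδ.1])
    _ ≤ (Measure.pi fun _ : Fin ns => Ps) good :=
        ofReal_one_sub_exp_le_measure_integral_le_empiricalMean_add hℓ_meas hℓ_mem hns
          (by positivity)
    _ = ((Measure.pi fun _ : Fin ns => Ps).prod (Measure.pi fun _ : Fin nt => Pt))
          (good ×ˢ Set.univ) := by
        rw [Measure.prod_prod, measure_univ, mul_one]
    _ ≤ _ := measure_mono fun p ⟨hp, _⟩ =>
        (hRt.trans (mul_le_mul_of_nonneg_left hp hB.le)).trans_eq
          (by rw [one_div, mul_add, mul_div_cancel₀ _ hB.ne'])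

/-- Theorem 2 (generalization bound): with probability at least `1 − 2δ`, the target
population risk `R_t = ∫ ℓ dP_t` of the squared loss `ℓ = (h − g)²` is bounded by
`B R̂_s + 4η² ε_{t'}`, where `R̂_s` is the empirical source risk and
`ε_{t'} = (√(B²/n_s + 1/n_t) + √(1/n_t)) (1 + √(2 log(1/δ)))`. -/
theorem generalization_bound
    {X : Type*} [MeasurableSpace X]
    {H : Type*} [NormedAddCommGroup H] [InnerProductSpace ℝ H] [CompleteSpace H]
    (B η : ℝ) (hB : 0 < B) (hη : 0 < η)
    (φ : X → H) (hφsm : StronglyMeasurable φ) (hφ : ∀ x, ‖φ x‖ ≤ 1)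
    (Ps Pt : Measure X) [IsProbabilityMeasure Ps] [IsProbabilityMeasure Pt]
    (w : X → ℝ) (hwmeas : Measurable w) (hw : ∀ x, 0 ≤ w x ∧ w x ≤ B)
    (hPt : Pt = Ps.withDensity fun x => ENNReal.ofReal (w x))
    (hint : Integrable φ Pt)
    (h g : X → ℝ) (ℓ : X → ℝ)
    (hℓdef : ∀ x, ℓ x = (h x - g x) ^ 2)
    (hℓnonneg : ∀ x, 0 ≤ ℓ x)
    (L : H) (hℓL : ∀ x, ℓ x = ⟪L, φ x⟫) (hL : ‖L‖ ≤ 4 * η ^ 2)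
    (ns nt : ℕ) (hns : 0 < ns) (hnt : 0 < nt)
    (δ : ℝ) (hδ : δ ∈ Set.Ioo (0 : ℝ) 1)
    (ε : ℝ)
    (hε : ε = (Real.sqrt (B ^ 2 / ns + 1 / nt) + Real.sqrt (1 / nt))
          * (1 + Real.sqrt (2 * Real.log (1 / δ)))) :
    ((Measure.pi fun _ : Fin ns => Ps).prod (Measure.pi fun _ : Fin nt => Pt))
      {p : (Fin ns → X) × (Fin nt → X) |
        (∫ x, ℓ x ∂Pt) ≤ B * ((1 / (ns : ℝ)) * ∑ i, ℓ (p.1 i)) + 4 * η ^ 2 * ε}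
      ≥ ENNReal.ofReal (1 - 2 * δ) :=
  generalization_bound_general B η hB hη φ hφsm hφ Ps Pt w hwmeas hw hPt ℓ hℓnonneg L hℓL hL ns nt
    hns δ hδ ε hε
end
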